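/- Let d ≥ 1 and let A be a finite subset of ℝ^2 not contained in any curve of degree at most d. Then the map τ_d ∘ σ_d^{-1} gives: the set of hyperplanes in ℝ^(binom(d+2,2)−1) associated (via the Veronese correspondence) to the curves of degree at most d determined by A equals the set of hyperplanes spanned by subsets of ψ_d(A). -/

import Mathlib

open scoped Classical

noncomputable section

/-- The zero set in `ℝ × ℝ` of a polynomial in two variables. -/
def zeroSet (p : MvPolynomial (Fin 2) ℝ) : Set (ℝ × ℝ) :=
  {x | MvPolynomial.eval ![x.1, x.2] p = 0}

/-- `C` is a curve of degree `e`: the zero set of a polynomial of total degree `e`. -/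
def IsCurve (e : ℕ) (C : Set (ℝ × ℝ)) : Prop :=
  ∃ p : MvPolynomial (Fin 2) ℝ, p.totalDegree = e ∧ C = zeroSet p

/-- `C` is a curve of degree at most `d` (and at least `1`). -/
def IsCurveLe (d : ℕ) (C : Set (ℝ × ℝ)) : Prop :=
  ∃ e, 1 ≤ e ∧ e ≤ d ∧ IsCurve e C

/-- Index set for the `d`-Veronese map: pairs `(n, m)` with `1 ≤ n + m ≤ d`.
It has `(d+2).choose 2 - 1` elements. -/
abbrev VIdx (d : ℕ) : Type :=
  {q : Fin (d + 1) × Fin (d + 1) // 1 ≤ (q.1 : ℕ) + (q.2 : ℕ) ∧ (q.1 : ℕ) + (q.2 : ℕ) ≤ d}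

/-- The `d`-Veronese map `ℝ² → ℝ^((d+2).choose 2 - 1)`. -/
def vero (d : ℕ) (a : ℝ × ℝ) : VIdx d → ℝ :=
  fun q => a.1 ^ (q.1.1 : ℕ) * a.2 ^ (q.1.2 : ℕ)

/-- Dimension of the affine hull of a set. -/
noncomputable def adim {α : Type*} (S : Set (α → ℝ)) : ℕ :=
  Module.finrank ℝ (affineSpan ℝ S).direction

/-- Dimension of an affine subspace. -/
noncomputable def fdim {α : Type*} (F : AffineSubspace ℝ (α → ℝ)) : ℕ :=
  Module.finrank ℝ F.direction

/-- The coefficient of the monomial `x^n y^m` in `p`, for `(n, m)` in the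
Veronese index set. -/
def coeffOf (d : ℕ) (p : MvPolynomial (Fin 2) ℝ) (q : VIdx d) : ℝ :=
  MvPolynomial.coeff (Finsupp.single 0 (q.1.1 : ℕ) + Finsupp.single 1 (q.1.2 : ℕ)) p

/-- The hyperplane in `ℝ^((d+2).choose 2 - 1)` associated to a polynomial of
degree between `1` and `d` via the Veronese correspondence. -/
def tau (d : ℕ) (p : MvPolynomial (Fin 2) ℝ) : Set (VIdx d → ℝ) :=
  {z | MvPolynomial.coeff 0 p + ∑ q : VIdx d, coeffOf d p q * z q = 0}

/-!
Identify a polynomial `p` of degree `≤ d` with its coefficient vector `(c₀, c) ∈ ℝ × ℝ^N`,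
`N = (d+2).choose 2 - 1`, so that `p a = c₀ + ⟪c, ψ_d a⟫` and `τ_d p = {z | c₀ + ⟪c, z⟫ = 0}`.
For `R ⊆ ℝ²` the coefficient vectors of the polynomials of degree `≤ d` vanishing on `R` form the
orthogonal complement `K` of `V = span {(1, ψ_d a) | a ∈ R}`, and `dim V = dim aff ψ_d(R) + 1`.
Hence `aff ψ_d(R)` is a hyperplane iff `dim K = 1`, and it is then `τ_d` of the polynomial
spanning `K`.

If the curve `Z(p)` of degree `d` (with equation `g`) is determined by `A`, then `K` is a line for
`R = Z(p) ∩ A`: a second polynomial `q` vanishing on `R` and not proportional to `g` yields the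
member `q x • g - g x • q` of the pencil, still of degree `d` and vanishing on `R` and at a point
`x` off the curve. Conversely, if `K = ℝ ∙ p` then `p` has degree exactly `d` (else `X₀ * p ∈ K`),
and every curve of degree `d` containing `Z(p) ∩ A ⊇ R` is the zero set of a multiple of `p`.
-/

open Module MvPolynomial Finset

lemma Submodule.eq_span_singleton_of_finrank_le_one {k V : Type*} [DivisionRing k] [AddCommGroup V]
    [Module k V] {W : Submodule k V} [FiniteDimensional k W] {v : V} (hv : v ∈ W) (hv0 : v ≠ 0)
    (h : finrank k W ≤ 1) : W = k ∙ v :=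
  (Submodule.eq_of_le_of_finrank_le ((Submodule.span_singleton_le_iff_mem _ _).2 hv)
    (by rwa [finrank_span_singleton hv0])).symm

lemma MvPolynomial.exists_eval_ne_zero {K σ : Type*} [Field K] [Infinite K]
    {f : MvPolynomial σ K} (hf : f ≠ 0) : ∃ x, eval x f ≠ 0 := by
  by_contra! h
  exact hf (MvPolynomial.funext fun x => by rw [h x, map_zero])

lemma MvPolynomial.exists_totalDegree_smul_sub_smul_eq {K σ : Type*} [Field K] [Infinite K]
    {g p : MvPolynomial σ K} (hg : g ≠ 0) (hp : p.totalDegree ≤ g.totalDegree)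
    (hgp : p ∉ K ∙ g) :
    ∃ x, eval x g ≠ 0 ∧ (eval x p • g - eval x g • p).totalDegree = g.totalDegree := by
  obtain ⟨m, hm, hgm⟩ := exists_mem_eq_sup g.support (support_nonempty.2 hg)
    fun m => m.sum fun _ e => e
  -- `m` is a monomial of top degree in `g`; off the zero set of `W` the pencil member below keeps
  -- a nonzero `m`-coefficient, namely `eval x W`.
  set W := coeff m g • p - coeff m p • g
  have hW : W ≠ 0 := fun h => hgp <| Submodule.mem_span_singleton.2
    ⟨(coeff m g)⁻¹ * coeff m p, by
      rw [mul_smul, ← sub_eq_zero.1 h, inv_smul_smul₀ (mem_support_iff.1 hm)]⟩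
  obtain ⟨x, hx⟩ := exists_eval_ne_zero (mul_ne_zero hg hW)
  rw [map_mul] at hx
  refine ⟨x, left_ne_zero_of_mul hx, le_antisymm ?_ ?_⟩
  · exact (totalDegree_sub _ _).trans
      (max_le (totalDegree_smul_le _ _) ((totalDegree_smul_le _ _).trans hp))
  · have hcoeff : coeff m (eval x p • g - eval x g • p) = eval x W := by
      simp only [W, coeff_sub, coeff_smul, smul_eq_mul, map_sub, smul_eval]
      ring
    have := le_totalDegree (mem_support_iff.2 (hcoeff ▸ right_ne_zero_of_mul hx))
    rwa [← hgm] at this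

section Homogenization

variable {ι : Type*}

def homogenize (z : ι → ℝ) : EuclideanSpace ℝ (Option ι) :=
  WithLp.toLp 2 fun o => o.elim 1 z

def extendByZero : (ι → ℝ) →ₗ[ℝ] EuclideanSpace ℝ (Option ι) :=
  (WithLp.linearEquiv 2 ℝ (Option ι → ℝ)).symm.toLinearMap ∘ₗ
    LinearMap.pi fun o => o.elim 0 LinearMap.proj

@[simp] lemma homogenize_none (z : ι → ℝ) : homogenize z none = 1 := rfl
@[simp] lemma homogenize_some (z : ι → ℝ) (i : ι) : homogenize z (some i) = z i := rfl
@[simp] lemma extendByZero_none (w : ι → ℝ) : extendByZero w none = 0 := rfl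
@[simp] lemma extendByZero_some (w : ι → ℝ) (i : ι) : extendByZero w (some i) = w i := rfl

lemma extendByZero_injective : Function.Injective (extendByZero (ι := ι)) :=
  fun _ _ h => funext fun i => congrArg (· (some i)) h

lemma homogenize_sub_homogenize (z z' : ι → ℝ) :
    homogenize z - homogenize z' = extendByZero (z - z') := by
  ext (_ | i) <;> simp

lemma span_homogenize_image_eq {S : Set (ι → ℝ)} {z₀ : ι → ℝ} (hz₀ : z₀ ∈ S) :
    Submodule.span ℝ (homogenize '' S) =
      (ℝ ∙ homogenize z₀) ⊔ (vectorSpan ℝ S).map extendByZero := by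
  apply le_antisymm
  · rw [Submodule.span_le]
    rintro _ ⟨z, hz, rfl⟩
    rw [← sub_add_cancel (homogenize z) (homogenize z₀), homogenize_sub_homogenize, add_comm]
    exact Submodule.add_mem_sup (Submodule.mem_span_singleton_self _)
      (Submodule.mem_map_of_mem (vsub_mem_vectorSpan ℝ hz hz₀))
  · refine sup_le ((Submodule.span_singleton_le_iff_mem _ _).2
      (Submodule.subset_span ⟨z₀, hz₀, rfl⟩)) ?_
    rw [vectorSpan_def, Submodule.map_span, Submodule.span_le]
    rintro _ ⟨_, ⟨a, ha, b, hb, rfl⟩, rfl⟩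
    rw [show extendByZero (a -ᵥ b) = homogenize a - homogenize b from
      (homogenize_sub_homogenize a b).symm]
    exact Submodule.sub_mem _ (Submodule.subset_span ⟨a, ha, rfl⟩)
      (Submodule.subset_span ⟨b, hb, rfl⟩)

lemma homogenize_mem_span_iff {S : Set (ι → ℝ)} {z : ι → ℝ} :
    homogenize z ∈ Submodule.span ℝ (homogenize '' S) ↔ z ∈ affineSpan ℝ S := by
  rcases S.eq_empty_or_nonempty with rfl | ⟨z₀, hz₀⟩
  · simp only [Set.image_empty, Submodule.span_empty, Submodule.mem_bot, AffineSubspace.span_empty,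
      AffineSubspace.notMem_bot, iff_false]
    exact fun h => one_ne_zero (congrArg (· none) h)
  rw [span_homogenize_image_eq hz₀, Submodule.mem_sup,
    ← AffineSubspace.vsub_right_mem_direction_iff_mem (mem_affineSpan ℝ hz₀), direction_affineSpan]
  constructor
  · rintro ⟨_, ht, _, ⟨w, hw, rfl⟩, hsum⟩
    obtain ⟨t, rfl⟩ := Submodule.mem_span_singleton.1 ht
    have ht1 : t = 1 := by simpa using congrArg (· none) hsum
    subst ht1
    rw [one_smul, ← eq_sub_iff_add_eq', homogenize_sub_homogenize] at hsum
    rwa [vsub_eq_sub, ← extendByZero_injective hsum]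
  · intro hz
    exact ⟨_, Submodule.mem_span_singleton_self _, _, Submodule.mem_map_of_mem hz, by
      rw [vsub_eq_sub, ← homogenize_sub_homogenize, add_sub_cancel]⟩

lemma finrank_span_homogenize_image [Fintype ι] {S : Set (ι → ℝ)} (hS : S.Nonempty) :
    finrank ℝ (Submodule.span ℝ (homogenize '' S)) = finrank ℝ (vectorSpan ℝ S) + 1 := by
  obtain ⟨z₀, hz₀⟩ := hS
  have hdisj : (ℝ ∙ homogenize z₀) ⊓ (vectorSpan ℝ S).map extendByZero = ⊥ := by
    refine eq_bot_iff.2 fun u ⟨hu, ⟨w, _, hw⟩⟩ => ?_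
    obtain ⟨t, rfl⟩ := Submodule.mem_span_singleton.1 hu
    have ht : t = 0 := by simpa using congrArg (· none) hw.symm
    simp [ht]
  have hline : finrank ℝ (ℝ ∙ homogenize z₀) = 1 :=
    finrank_span_singleton fun h => one_ne_zero (congrArg (· none) h)
  have hmap : finrank ℝ ((vectorSpan ℝ S).map extendByZero) = finrank ℝ (vectorSpan ℝ S) :=
    (Submodule.equivMapOfInjective _ extendByZero_injective _).finrank_eq.symm
  have := Submodule.finrank_sup_add_finrank_inf_eq (ℝ ∙ homogenize z₀)
    ((vectorSpan ℝ S).map extendByZero)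
  rw [← span_homogenize_image_eq hz₀, hdisj, finrank_bot, hline, hmap] at this
  omega

lemma finrank_orthogonal_span_homogenize_add_finrank_vectorSpan [Fintype ι] {S : Set (ι → ℝ)}
    (hS : S.Nonempty) :
    finrank ℝ (Submodule.span ℝ (homogenize '' S))ᗮ + finrank ℝ (vectorSpan ℝ S) =
      Fintype.card ι := by
  have := (Submodule.span ℝ (homogenize '' S)).finrank_add_finrank_orthogonal
  rw [finrank_span_homogenize_image hS, finrank_euclideanSpace, Fintype.card_option] at this
  omega

lemma coe_affineSpan_eq_of_orthogonal_eq [Fintype ι] {S : Set (ι → ℝ)}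
    {v : EuclideanSpace ℝ (Option ι)}
    (h : (Submodule.span ℝ (homogenize '' S))ᗮ = ℝ ∙ v) :
    (affineSpan ℝ S : Set (ι → ℝ)) = {z | inner ℝ v (homogenize z) = 0} := by
  ext z
  rw [SetLike.mem_coe, ← homogenize_mem_span_iff, ← Submodule.orthogonal_orthogonal
    (Submodule.span ℝ _), h, Submodule.mem_orthogonal_singleton_iff_inner_right]
  rfl

lemma mem_orthogonal_span_homogenize_iff [Fintype ι] {S : Set (ι → ℝ)}
    {v : EuclideanSpace ℝ (Option ι)} :
    v ∈ (Submodule.span ℝ (homogenize '' S))ᗮ ↔ ∀ z ∈ S, inner ℝ v (homogenize z) = 0 := by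
  rw [← Submodule.span_singleton_le_iff_mem, ← Submodule.isOrtho_iff_le, Submodule.isOrtho_span]
  simp

end Homogenization

section Veronese

variable (d : ℕ)

lemma sum_exponents_fin_two (m : Fin 2 →₀ ℕ) : (m.sum fun _ e => e) = m 0 + m 1 := by
  rw [Finsupp.sum_fintype _ _ fun _ => rfl, Fin.sum_univ_two]

def veroExp : Option (VIdx d) → Fin 2 →₀ ℕ
  | none => 0
  | some q => Finsupp.single 0 (q.1.1 : ℕ) + Finsupp.single 1 (q.1.2 : ℕ)

@[simp] lemma veroExp_some_zero (q : VIdx d) : veroExp d (some q) 0 = q.1.1 := by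
  simp [veroExp]

@[simp] lemma veroExp_some_one (q : VIdx d) : veroExp d (some q) 1 = q.1.2 := by
  simp [veroExp]

lemma veroExp_some_ne_zero (q : VIdx d) : veroExp d (some q) ≠ 0 := fun h => by
  have h0 := congrArg (· 0) h
  have h1 := congrArg (· 1) h
  simp only [veroExp_some_zero, veroExp_some_one, Finsupp.coe_zero, Pi.zero_apply] at h0 h1
  have := q.2.1
  omega

lemma veroExp_injective : Function.Injective (veroExp d) := by
  rintro (_ | q) (_ | r) h
  · rfl
  · exact absurd h.symm (veroExp_some_ne_zero d r)
  · exact absurd h (veroExp_some_ne_zero d q)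
  · have h0 := congrArg (· 0) h
    have h1 := congrArg (· 1) h
    simp only [veroExp_some_zero, veroExp_some_one] at h0 h1
    exact congrArg some (Subtype.ext (Prod.ext (Fin.ext h0) (Fin.ext h1)))

lemma degree_veroExp_le (o : Option (VIdx d)) : ((veroExp d o).sum fun _ e => e) ≤ d := by
  rcases o with _ | q
  · simp [veroExp]
  · rw [sum_exponents_fin_two, veroExp_some_zero, veroExp_some_one]
    exact q.2.2

lemma exists_veroExp_eq {m : Fin 2 →₀ ℕ} (hm : (m.sum fun _ e => e) ≤ d) :
    ∃ o, veroExp d o = m := by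
  rw [sum_exponents_fin_two] at hm
  by_cases h0 : m = 0
  · exact ⟨none, h0.symm⟩
  have hpos : 1 ≤ m 0 + m 1 := by
    by_contra! h
    exact h0 (Finsupp.ext fun i => by fin_cases i <;> simp <;> omega)
  refine ⟨some ⟨(⟨m 0, by omega⟩, ⟨m 1, by omega⟩), hpos, hm⟩, Finsupp.ext fun i => ?_⟩
  fin_cases i <;> simp

def coeffVec : MvPolynomial (Fin 2) ℝ →ₗ[ℝ] EuclideanSpace ℝ (Option (VIdx d)) :=
  (WithLp.linearEquiv 2 ℝ _).symm.toLinearMap ∘ₗ LinearMap.pi fun o => lcoeff ℝ (veroExp d o)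

lemma coeffVec_apply (p : MvPolynomial (Fin 2) ℝ) (o : Option (VIdx d)) :
    coeffVec d p o = coeff (veroExp d o) p := rfl

def ofCoeffVec (v : EuclideanSpace ℝ (Option (VIdx d))) : MvPolynomial (Fin 2) ℝ :=
  ∑ o, monomial (veroExp d o) (v o)

lemma coeff_ofCoeffVec (v : EuclideanSpace ℝ (Option (VIdx d))) (m : Fin 2 →₀ ℕ) :
    coeff m (ofCoeffVec d v) = ∑ o, if veroExp d o = m then v o else 0 := by
  simp only [ofCoeffVec, coeff_sum, coeff_monomial]

lemma coeffVec_ofCoeffVec (v : EuclideanSpace ℝ (Option (VIdx d))) :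
    coeffVec d (ofCoeffVec d v) = v := by
  ext o
  rw [coeffVec_apply, coeff_ofCoeffVec, Finset.sum_eq_single o
    (fun o' _ h => if_neg fun h' => h (veroExp_injective d h')) (by simp), if_pos rfl]

lemma ofCoeffVec_coeffVec {p : MvPolynomial (Fin 2) ℝ} (hp : p.totalDegree ≤ d) :
    ofCoeffVec d (coeffVec d p) = p := by
  ext m
  by_cases hm : ∃ o, veroExp d o = m
  · obtain ⟨o, rfl⟩ := hm
    rw [← coeffVec_apply, coeffVec_ofCoeffVec, coeffVec_apply]
  · push Not at hm
    rw [coeff_ofCoeffVec, Finset.sum_eq_zero fun o _ => if_neg (hm o), eq_comm]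
    by_contra h
    exact absurd (exists_veroExp_eq d ((le_totalDegree (mem_support_iff.2 h)).trans hp))
      (not_exists.2 hm)

lemma totalDegree_ofCoeffVec_le (v : EuclideanSpace ℝ (Option (VIdx d))) :
    (ofCoeffVec d v).totalDegree ≤ d :=
  (totalDegree_finsetSum _ _).trans <| Finset.sup_le fun o _ =>
    (totalDegree_monomial_le _ _).trans (degree_veroExp_le d o)

lemma eq_of_coeffVec_eq {p p' : MvPolynomial (Fin 2) ℝ} (hp : p.totalDegree ≤ d)
    (hp' : p'.totalDegree ≤ d) (h : coeffVec d p = coeffVec d p') : p = p' := by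
  rw [← ofCoeffVec_coeffVec d hp, h, ofCoeffVec_coeffVec d hp']

lemma prod_pow_veroExp (a : ℝ × ℝ) (o : Option (VIdx d)) :
    ((veroExp d o).prod fun i k => ![a.1, a.2] i ^ k) = homogenize (vero d a) o := by
  rcases o with _ | q
  · simp [veroExp]
  · rw [Finsupp.prod_fintype _ _ fun _ => pow_zero _, Fin.prod_univ_two]
    simp [vero]

lemma eval_ofCoeffVec (v : EuclideanSpace ℝ (Option (VIdx d))) (a : ℝ × ℝ) :
    eval ![a.1, a.2] (ofCoeffVec d v) = inner ℝ v (homogenize (vero d a)) := by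
  simp only [ofCoeffVec, map_sum, eval_monomial, prod_pow_veroExp, PiLp.inner_apply,
    RCLike.inner_apply, conj_trivial, mul_comm]

lemma eval_eq_inner_coeffVec {p : MvPolynomial (Fin 2) ℝ} (hp : p.totalDegree ≤ d) (a : ℝ × ℝ) :
    eval ![a.1, a.2] p = inner ℝ (coeffVec d p) (homogenize (vero d a)) := by
  rw [← eval_ofCoeffVec, ofCoeffVec_coeffVec d hp]

lemma tau_eq_setOf_inner (p : MvPolynomial (Fin 2) ℝ) :
    tau d p = {z | inner ℝ (coeffVec d p) (homogenize z) = 0} := by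
  ext z
  simp [tau, coeffOf, coeffVec_apply, veroExp, PiLp.inner_apply, Fintype.sum_option, mul_comm]

lemma card_filter_add_le (n : Fin (d + 1)) :
    #{m : Fin (d + 1) | (n : ℕ) + m ≤ d} = d - n + 1 := by
  have h : ({m : Fin (d + 1) | (n : ℕ) + m ≤ d} : Finset _) = Iic ⟨d - n, by omega⟩ := by
    ext m
    simp only [mem_filter, mem_univ, true_and, mem_Iic, Fin.le_def]
    omega
  rw [h, Fin.card_Iic]

lemma card_lowerTriangle :
    Fintype.card {q : Fin (d + 1) × Fin (d + 1) // (q.1 : ℕ) + q.2 ≤ d} = (d + 2).choose 2 := by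
  rw [Fintype.card_subtype, card_filter, Fintype.sum_prod_type]
  simp only [← card_filter, card_filter_add_le]
  calc ∑ n : Fin (d + 1), (d - n + 1) = ∑ i ∈ range (d + 1), (d - i + 1) :=
        Fin.sum_univ_eq_sum_range (fun i => d - i + 1) _
    _ = ∑ i ∈ range (d + 1), (i + 1) := by
        rw [← sum_range_reflect]
        exact sum_congr rfl fun i hi => by rw [mem_range] at hi; omega
    _ = ∑ i ∈ range (d + 2), i := by rw [sum_range_succ' _ (d + 1), add_zero]
    _ = (d + 2).choose 2 := by rw [sum_range_id, Nat.choose_two_right]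

lemma card_VIdx : Fintype.card (VIdx d) = (d + 2).choose 2 - 1 := by
  rw [← card_lowerTriangle, Fintype.card_subtype, Fintype.card_subtype]
  have h : ({q : Fin (d + 1) × Fin (d + 1) | 1 ≤ (q.1 : ℕ) + q.2 ∧ (q.1 : ℕ) + q.2 ≤ d} :
      Finset _) = ({q | (q.1 : ℕ) + q.2 ≤ d} : Finset _).erase 0 := by
    ext ⟨m, n⟩
    simp only [mem_filter, mem_univ, true_and, mem_erase, ne_eq, Prod.mk_eq_zero, Fin.ext_iff,
      Fin.val_zero]
    omega
  rw [h, card_erase_of_mem (by simp)]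

lemma two_le_card_VIdx (hd : 1 ≤ d) : 2 ≤ Fintype.card (VIdx d) := by
  have h3 : 3 ≤ (d + 2).choose 2 := Nat.choose_le_choose 2 (show 3 ≤ d + 2 by omega)
  rw [card_VIdx]
  omega

end Veronese

lemma zeroSet_smul {t : ℝ} (ht : t ≠ 0) (p : MvPolynomial (Fin 2) ℝ) :
    zeroSet (t • p) = zeroSet p := by
  ext a
  simp [zeroSet, smul_eval, ht]

def IsDeterminedBy (d : ℕ) (A C : Set (ℝ × ℝ)) : Prop :=
  ∀ C₂ : Set (ℝ × ℝ), IsCurve d C₂ → C ∩ A ⊆ C₂ → C = C₂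

section VanishingCoeffs

variable (d : ℕ)

def vanishingCoeffs (R : Set (ℝ × ℝ)) : Submodule ℝ (EuclideanSpace ℝ (Option (VIdx d))) :=
  (Submodule.span ℝ (homogenize '' (vero d '' R)))ᗮ

variable {d}

lemma coeffVec_mem_vanishingCoeffs_iff {p : MvPolynomial (Fin 2) ℝ} (hp : p.totalDegree ≤ d)
    {R : Set (ℝ × ℝ)} : coeffVec d p ∈ vanishingCoeffs d R ↔ R ⊆ zeroSet p := by
  simp only [vanishingCoeffs, mem_orthogonal_span_homogenize_iff, Set.forall_mem_image,
    ← eval_eq_inner_coeffVec d hp]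
  rfl

lemma mem_vanishingCoeffs_iff {v : EuclideanSpace ℝ (Option (VIdx d))} {R : Set (ℝ × ℝ)} :
    v ∈ vanishingCoeffs d R ↔ R ⊆ zeroSet (ofCoeffVec d v) := by
  rw [← coeffVec_mem_vanishingCoeffs_iff (totalDegree_ofCoeffVec_le d v), coeffVec_ofCoeffVec]

lemma finrank_vanishingCoeffs_add_fdim {R : Set (ℝ × ℝ)} (hR : R.Nonempty) :
    finrank ℝ (vanishingCoeffs d R) + fdim (affineSpan ℝ (vero d '' R)) =
      Fintype.card (VIdx d) := by
  rw [fdim, direction_affineSpan]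
  exact finrank_orthogonal_span_homogenize_add_finrank_vectorSpan (hR.image _)

lemma finrank_vanishingCoeffs_empty :
    finrank ℝ (vanishingCoeffs d ∅) = Fintype.card (VIdx d) + 1 := by
  rw [vanishingCoeffs, Set.image_empty, Set.image_empty, Submodule.span_empty,
    Submodule.bot_orthogonal_eq_top, finrank_top, finrank_euclideanSpace, Fintype.card_option]

lemma coe_affineSpan_eq_tau {p : MvPolynomial (Fin 2) ℝ} {R : Set (ℝ × ℝ)}
    (h : vanishingCoeffs d R = ℝ ∙ coeffVec d p) :
    (affineSpan ℝ (vero d '' R) : Set (VIdx d → ℝ)) = tau d p := by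
  rw [tau_eq_setOf_inner]
  exact coe_affineSpan_eq_of_orthogonal_eq h

end VanishingCoeffs

section Correspondence

variable {d : ℕ}

lemma finrank_vanishingCoeffs_le_one {A : Set (ℝ × ℝ)} {g : MvPolynomial (Fin 2) ℝ}
    (hg0 : g ≠ 0) (hg : g.totalDegree = d) (hdet : IsDeterminedBy d A (zeroSet g)) :
    finrank ℝ (vanishingCoeffs d (zeroSet g ∩ A)) ≤ 1 := by
  set K := vanishingCoeffs d (zeroSet g ∩ A)
  by_contra! hK
  obtain ⟨v, hvK, hv⟩ : ∃ v ∈ K, v ∉ ℝ ∙ coeffVec d g := by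
    by_contra! h
    have := (Submodule.finrank_mono h).trans (finrank_span_le_card {coeffVec d g})
    rw [Set.toFinset_singleton, card_singleton] at this
    omega
  set p := ofCoeffVec d v
  have hpv : coeffVec d p = v := coeffVec_ofCoeffVec d v
  have hp : p ∉ ℝ ∙ g := fun hp => hv <| by
    obtain ⟨c, hc⟩ := Submodule.mem_span_singleton.1 hp
    rw [← hpv, ← hc, map_smul]
    exact Submodule.smul_mem _ _ (Submodule.mem_span_singleton_self _)
  obtain ⟨x, hgx, hdeg⟩ := exists_totalDegree_smul_sub_smul_eq hg0
    (hg ▸ totalDegree_ofCoeffVec_le d v) hp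
  set h := eval x p • g - eval x g • p
  have hpR : zeroSet g ∩ A ⊆ zeroSet p := mem_vanishingCoeffs_iff.1 hvK
  -- `h` lies in the pencil spanned by `g` and `p`, and vanishes at `x`, where `g` does not.
  have hgh : zeroSet g = zeroSet h := hdet _ ⟨h, hdeg.trans hg, rfl⟩ fun a ha => by
    have hpa : eval ![a.1, a.2] p = 0 := hpR ha
    have hga : eval ![a.1, a.2] g = 0 := ha.1
    simp [zeroSet, h, smul_eval, hpa, hga]
  have hx : ![x 0, x 1] = x := by
    ext i
    fin_cases i <;> rfl
  have hxh : (x 0, x 1) ∈ zeroSet h := by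
    simp only [zeroSet, Set.mem_ofPred_eq, hx, h, map_sub, smul_eval]
    ring
  rw [← hgh] at hxh
  exact hgx (hx ▸ hxh)

lemma affineSpan_eq_tau_of_isDeterminedBy (hd : 1 ≤ d) {A : Set (ℝ × ℝ)}
    {p : MvPolynomial (Fin 2) ℝ} (hp1 : 1 ≤ p.totalDegree) (hpd : p.totalDegree ≤ d)
    (hcurve : IsCurve d (zeroSet p)) (hdet : IsDeterminedBy d A (zeroSet p)) :
    tau d p = affineSpan ℝ (vero d '' (zeroSet p ∩ A)) ∧
      fdim (affineSpan ℝ (vero d '' (zeroSet p ∩ A))) = Fintype.card (VIdx d) - 1 := by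
  obtain ⟨g, hg, hpg⟩ := hcurve
  have hp0 : coeffVec d p ≠ 0 := fun h => by
    rw [← map_zero (coeffVec d)] at h
    rw [eq_of_coeffVec_eq d hpd (by simp) h, totalDegree_zero] at hp1
    omega
  have hg0 : g ≠ 0 := by
    rintro rfl
    rw [totalDegree_zero] at hg
    omega
  have hK : vanishingCoeffs d (zeroSet p ∩ A) = ℝ ∙ coeffVec d p := by
    refine Submodule.eq_span_singleton_of_finrank_le_one
      ((coeffVec_mem_vanishingCoeffs_iff hpd).2 Set.inter_subset_left) hp0 ?_
    rw [hpg] at hdet ⊢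
    exact finrank_vanishingCoeffs_le_one hg0 hg hdet
  have hR : (zeroSet p ∩ A).Nonempty := by
    rw [Set.nonempty_iff_ne_empty]
    intro hR
    have := finrank_vanishingCoeffs_empty (d := d)
    rw [← hR, hK, finrank_span_singleton hp0] at this
    have := two_le_card_VIdx d hd
    omega
  refine ⟨(coe_affineSpan_eq_tau hK).symm, ?_⟩
  have := finrank_vanishingCoeffs_add_fdim (d := d) hR
  rw [hK, finrank_span_singleton hp0] at this
  omega

lemma eq_smul_of_vanishingCoeffs_eq {R : Set (ℝ × ℝ)} {p h : MvPolynomial (Fin 2) ℝ}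
    (hK : vanishingCoeffs d R = ℝ ∙ coeffVec d p) (hpd : p.totalDegree ≤ d)
    (hhd : h.totalDegree ≤ d) (hR : R ⊆ zeroSet h) : ∃ t : ℝ, h = t • p := by
  have := (coeffVec_mem_vanishingCoeffs_iff hhd).2 hR
  rw [hK, Submodule.mem_span_singleton] at this
  obtain ⟨t, ht⟩ := this
  exact ⟨t, eq_of_coeffVec_eq d hhd ((totalDegree_smul_le _ _).trans hpd) (by rw [map_smul, ht])⟩

lemma totalDegree_eq_of_vanishingCoeffs_eq {R : Set (ℝ × ℝ)} {p : MvPolynomial (Fin 2) ℝ}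
    (hK : vanishingCoeffs d R = ℝ ∙ coeffVec d p) (hpd : p.totalDegree ≤ d) (hp0 : p ≠ 0) :
    p.totalDegree = d := by
  by_contra hne
  have hR : R ⊆ zeroSet p := (coeffVec_mem_vanishingCoeffs_iff hpd).1 <|
    hK ▸ Submodule.mem_span_singleton_self _
  -- otherwise `X 0 * p` would be another multiple of `p` vanishing on `R`
  obtain ⟨t, ht⟩ := eq_smul_of_vanishingCoeffs_eq (h := X 0 * p) hK hpd
    ((totalDegree_mul _ _).trans (by rw [totalDegree_X]; omega)) fun a ha => by
      have hpa : eval ![a.1, a.2] p = 0 := hR ha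
      simp [zeroSet, hpa]
  rw [smul_eq_C_mul] at ht
  have := congrArg totalDegree (mul_right_cancel₀ hp0 ht)
  rw [totalDegree_X, totalDegree_C] at this
  exact one_ne_zero this

lemma exists_isDeterminedBy_of_fdim_eq (hd : 1 ≤ d) {A R : Set (ℝ × ℝ)} (hRA : R ⊆ A)
    (hdim : fdim (affineSpan ℝ (vero d '' R)) = Fintype.card (VIdx d) - 1) :
    ∃ p : MvPolynomial (Fin 2) ℝ, p.totalDegree = d ∧ IsDeterminedBy d A (zeroSet p) ∧
      (affineSpan ℝ (vero d '' R) : Set (VIdx d → ℝ)) = tau d p := by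
  have hN := two_le_card_VIdx d hd
  have hR : R.Nonempty := by
    rw [Set.nonempty_iff_ne_empty]
    rintro rfl
    rw [Set.image_empty, AffineSubspace.span_empty, fdim, AffineSubspace.direction_bot,
      finrank_bot] at hdim
    omega
  have hK1 := finrank_vanishingCoeffs_add_fdim (d := d) hR
  have hK0 : vanishingCoeffs d R ≠ ⊥ := fun h => by
    rw [h, finrank_bot] at hK1
    omega
  obtain ⟨v, hvK, hv0⟩ := Submodule.exists_mem_ne_zero_of_ne_bot hK0
  set p := ofCoeffVec d v
  have hpv : coeffVec d p = v := coeffVec_ofCoeffVec d v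
  have hpd : p.totalDegree ≤ d := totalDegree_ofCoeffVec_le d v
  have hK : vanishingCoeffs d R = ℝ ∙ coeffVec d p := by
    rw [hpv]
    exact Submodule.eq_span_singleton_of_finrank_le_one hvK hv0 (by omega)
  have hp0 : p ≠ 0 := fun h => hv0 (by rw [← hpv, h, map_zero])
  have hp := totalDegree_eq_of_vanishingCoeffs_eq hK hpd hp0
  refine ⟨p, hp, ?_, coe_affineSpan_eq_tau hK⟩
  rintro _ ⟨h, hh, rfl⟩ hpA
  have hRp : R ⊆ zeroSet p := mem_vanishingCoeffs_iff.1 hvK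
  obtain ⟨t, rfl⟩ := eq_smul_of_vanishingCoeffs_eq hK hpd hh.le
    fun a ha => hpA ⟨hRp ha, hRA ha⟩
  have ht : t ≠ 0 := by
    rintro rfl
    rw [zero_smul, totalDegree_zero] at hh
    omega
  rw [zeroSet_smul ht]

end Correspondence

theorem stmt_13_general (d : ℕ) (hd : 1 ≤ d) (A : Finset (ℝ × ℝ)) :
    {H : Set (VIdx d → ℝ) | ∃ p : MvPolynomial (Fin 2) ℝ,
        1 ≤ p.totalDegree ∧ p.totalDegree ≤ d ∧
        IsCurve d (zeroSet p) ∧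
        (∀ C₂ : Set (ℝ × ℝ), IsCurve d C₂ → zeroSet p ∩ ↑A ⊆ C₂ → zeroSet p = C₂) ∧
        H = tau d p}
      = {H : Set (VIdx d → ℝ) | ∃ R : Set (ℝ × ℝ), R ⊆ ↑A ∧
          H = ↑(affineSpan ℝ (vero d '' R)) ∧
          fdim (affineSpan ℝ (vero d '' R)) = Nat.choose (d + 2) 2 - 2} := by
  have hN : Nat.choose (d + 2) 2 - 2 = Fintype.card (VIdx d) - 1 := by
    rw [card_VIdx]
    omega
  ext H
  simp only [Set.mem_ofPred_eq, hN]
  constructor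
  · rintro ⟨p, hp1, hpd, hcurve, hdet, rfl⟩
    exact ⟨_, Set.inter_subset_right, affineSpan_eq_tau_of_isDeterminedBy hd hp1 hpd hcurve hdet⟩
  · rintro ⟨R, hRA, rfl, hdim⟩
    obtain ⟨p, hp, hdet, hR⟩ := exists_isDeterminedBy_of_fdim_eq hd hRA hdim
    exact ⟨p, hp ▸ hd, hp.le, ⟨p, hp, rfl⟩, hdet, hR⟩

theorem stmt_13 (d : ℕ) (hd : 1 ≤ d) (A : Finset (ℝ × ℝ))
    (hA : ∀ C : Set (ℝ × ℝ), IsCurveLe d C → ¬(↑A ⊆ C)) :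
    {H : Set (VIdx d → ℝ) | ∃ p : MvPolynomial (Fin 2) ℝ,
        1 ≤ p.totalDegree ∧ p.totalDegree ≤ d ∧
        IsCurve d (zeroSet p) ∧
        (∀ C₂ : Set (ℝ × ℝ), IsCurve d C₂ → zeroSet p ∩ ↑A ⊆ C₂ → zeroSet p = C₂) ∧
        H = tau d p}
      = {H : Set (VIdx d → ℝ) | ∃ R : Set (ℝ × ℝ), R ⊆ ↑A ∧
          H = ↑(affineSpan ℝ (vero d '' R)) ∧
          fdim (affineSpan ℝ (vero d '' R)) = Nat.choose (d + 2) 2 - 2} :=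
  stmt_13_general d hd A
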